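/- arXiv:1004.0561 — 4 statements merged into one kernel-verified Lean document; each statement's English description precedes it below -/
import Mathlib

section
/- The linear subspace V = {v ∈ ℝ⁶ : v₁+v₂ = v₄, v₂+v₃ = v₅, v₁+v₂+v₃ = v₆} is invariant under right multiplication by each of the 12 matrices B_n associated to the strong arbitrages. -/
/-- The twelve `6×6` matrices `B_n` of the paper (acting on row vectors on the right),
in the log-coordinates `v = (log r_FA, log r_AR, log r_RM, log r_FR, log r_AM, log r_FM)`. -/
def B : Fin 12 → Matrix (Fin 6) (Fin 6) ℝ :=
  ![!![0,0,0,0,0,0; -1,1,0,0,0,0; 0,0,1,0,0,0; 1,0,0,1,0,0; 0,0,0,0,1,0; 0,0,0,0,0,1],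
    !![0,0,0,0,0,0; 0,1,0,0,0,0; 0,0,1,0,0,0; 0,0,0,1,0,0; -1,0,0,0,1,0; 1,0,0,0,0,1],
    !![1,0,0,1,0,0; 0,1,0,1,0,0; 0,0,1,0,0,0; 0,0,0,0,0,0; 0,0,0,0,1,0; 0,0,0,0,0,1],
    !![1,0,0,0,0,0; 0,1,0,0,0,0; 0,0,1,-1,0,0; 0,0,0,0,0,0; 0,0,0,0,1,0; 0,0,0,1,0,1],
    !![1,0,0,0,0,1; 0,1,0,0,0,0; 0,0,1,0,0,0; 0,0,0,1,0,0; 0,0,0,0,1,1; 0,0,0,0,0,0],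
    !![1,0,0,0,0,0; 0,1,0,0,0,0; 0,0,1,0,0,1; 0,0,0,1,0,1; 0,0,0,0,1,0; 0,0,0,0,0,0],
    !![1,-1,0,0,0,0; 0,0,0,0,0,0; 0,0,1,0,0,0; 0,1,0,1,0,0; 0,0,0,0,1,0; 0,0,0,0,0,1],
    !![1,0,0,0,0,0; 0,0,0,0,0,0; 0,-1,1,0,0,0; 0,0,0,1,0,0; 0,1,0,0,1,0; 0,0,0,0,0,1],
    !![1,0,0,0,-1,0; 0,1,0,0,0,0; 0,0,1,0,0,0; 0,0,0,1,0,0; 0,0,0,0,0,0; 0,0,0,0,1,1],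
    !![1,0,0,0,0,0; 0,1,0,0,1,0; 0,0,1,0,1,0; 0,0,0,1,0,0; 0,0,0,0,0,0; 0,0,0,0,0,1],
    !![1,0,0,0,0,0; 0,1,0,0,0,0; 0,0,0,0,0,0; 0,0,-1,1,0,0; 0,0,0,0,1,0; 0,0,1,0,0,1],
    !![1,0,0,0,0,0; 0,1,-1,0,0,0; 0,0,0,0,0,0; 0,0,0,1,0,0; 0,0,1,0,1,0; 0,0,0,0,0,1]]

/-- The common invariant subspace: the image of the balanced ensembles in
log-coordinates `v = (log r_FA, log r_AR, log r_RM, log r_FR, log r_AM, log r_FM)`. -/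
def V : Set (Fin 6 → ℝ) :=
  {v | v 0 + v 1 = v 3 ∧ v 1 + v 2 = v 4 ∧ v 0 + v 1 + v 2 = v 5}

lemma vec6_0 {α : Type*} (x0 x1 x2 x3 x4 x5 : α) : ![x0,x1,x2,x3,x4,x5] (0 : Fin 6) = x0 := rfl
lemma vec6_1 {α : Type*} (x0 x1 x2 x3 x4 x5 : α) : ![x0,x1,x2,x3,x4,x5] (1 : Fin 6) = x1 := rfl
lemma vec6_2 {α : Type*} (x0 x1 x2 x3 x4 x5 : α) : ![x0,x1,x2,x3,x4,x5] (2 : Fin 6) = x2 := rfl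
lemma vec6_3 {α : Type*} (x0 x1 x2 x3 x4 x5 : α) : ![x0,x1,x2,x3,x4,x5] (3 : Fin 6) = x3 := rfl
lemma vec6_4 {α : Type*} (x0 x1 x2 x3 x4 x5 : α) : ![x0,x1,x2,x3,x4,x5] (4 : Fin 6) = x4 := rfl
lemma vec6_5 {α : Type*} (x0 x1 x2 x3 x4 x5 : α) : ![x0,x1,x2,x3,x4,x5] (5 : Fin 6) = x5 := rfl
lemma vec12_0 {α : Type*} (x0 x1 x2 x3 x4 x5 x6 x7 x8 x9 x10 x11 : α) : ![x0,x1,x2,x3,x4,x5,x6,x7,x8,x9,x10,x11] (0 : Fin 12) = x0 := rfl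
lemma vec12_1 {α : Type*} (x0 x1 x2 x3 x4 x5 x6 x7 x8 x9 x10 x11 : α) : ![x0,x1,x2,x3,x4,x5,x6,x7,x8,x9,x10,x11] (1 : Fin 12) = x1 := rfl
lemma vec12_2 {α : Type*} (x0 x1 x2 x3 x4 x5 x6 x7 x8 x9 x10 x11 : α) : ![x0,x1,x2,x3,x4,x5,x6,x7,x8,x9,x10,x11] (2 : Fin 12) = x2 := rfl
lemma vec12_3 {α : Type*} (x0 x1 x2 x3 x4 x5 x6 x7 x8 x9 x10 x11 : α) : ![x0,x1,x2,x3,x4,x5,x6,x7,x8,x9,x10,x11] (3 : Fin 12) = x3 := rfl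
lemma vec12_4 {α : Type*} (x0 x1 x2 x3 x4 x5 x6 x7 x8 x9 x10 x11 : α) : ![x0,x1,x2,x3,x4,x5,x6,x7,x8,x9,x10,x11] (4 : Fin 12) = x4 := rfl
lemma vec12_5 {α : Type*} (x0 x1 x2 x3 x4 x5 x6 x7 x8 x9 x10 x11 : α) : ![x0,x1,x2,x3,x4,x5,x6,x7,x8,x9,x10,x11] (5 : Fin 12) = x5 := rfl
lemma vec12_6 {α : Type*} (x0 x1 x2 x3 x4 x5 x6 x7 x8 x9 x10 x11 : α) : ![x0,x1,x2,x3,x4,x5,x6,x7,x8,x9,x10,x11] (6 : Fin 12) = x6 := rfl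
lemma vec12_7 {α : Type*} (x0 x1 x2 x3 x4 x5 x6 x7 x8 x9 x10 x11 : α) : ![x0,x1,x2,x3,x4,x5,x6,x7,x8,x9,x10,x11] (7 : Fin 12) = x7 := rfl
lemma vec12_8 {α : Type*} (x0 x1 x2 x3 x4 x5 x6 x7 x8 x9 x10 x11 : α) : ![x0,x1,x2,x3,x4,x5,x6,x7,x8,x9,x10,x11] (8 : Fin 12) = x8 := rfl
lemma vec12_9 {α : Type*} (x0 x1 x2 x3 x4 x5 x6 x7 x8 x9 x10 x11 : α) : ![x0,x1,x2,x3,x4,x5,x6,x7,x8,x9,x10,x11] (9 : Fin 12) = x9 := rfl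
lemma vec12_10 {α : Type*} (x0 x1 x2 x3 x4 x5 x6 x7 x8 x9 x10 x11 : α) : ![x0,x1,x2,x3,x4,x5,x6,x7,x8,x9,x10,x11] (10 : Fin 12) = x10 := rfl
lemma vec12_11 {α : Type*} (x0 x1 x2 x3 x4 x5 x6 x7 x8 x9 x10 x11 : α) : ![x0,x1,x2,x3,x4,x5,x6,x7,x8,x9,x10,x11] (11 : Fin 12) = x11 := rfl
lemma vec12m_0 {α : Type*} (x0 x1 x2 x3 x4 x5 x6 x7 x8 x9 x10 x11 : α) (h : 0 < 12) : ![x0,x1,x2,x3,x4,x5,x6,x7,x8,x9,x10,x11] (⟨0, h⟩ : Fin 12) = x0 := rfl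
lemma vec12m_1 {α : Type*} (x0 x1 x2 x3 x4 x5 x6 x7 x8 x9 x10 x11 : α) (h : 1 < 12) : ![x0,x1,x2,x3,x4,x5,x6,x7,x8,x9,x10,x11] (⟨1, h⟩ : Fin 12) = x1 := rfl
lemma vec12m_2 {α : Type*} (x0 x1 x2 x3 x4 x5 x6 x7 x8 x9 x10 x11 : α) (h : 2 < 12) : ![x0,x1,x2,x3,x4,x5,x6,x7,x8,x9,x10,x11] (⟨2, h⟩ : Fin 12) = x2 := rfl
lemma vec12m_3 {α : Type*} (x0 x1 x2 x3 x4 x5 x6 x7 x8 x9 x10 x11 : α) (h : 3 < 12) : ![x0,x1,x2,x3,x4,x5,x6,x7,x8,x9,x10,x11] (⟨3, h⟩ : Fin 12) = x3 := rfl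
lemma vec12m_4 {α : Type*} (x0 x1 x2 x3 x4 x5 x6 x7 x8 x9 x10 x11 : α) (h : 4 < 12) : ![x0,x1,x2,x3,x4,x5,x6,x7,x8,x9,x10,x11] (⟨4, h⟩ : Fin 12) = x4 := rfl
lemma vec12m_5 {α : Type*} (x0 x1 x2 x3 x4 x5 x6 x7 x8 x9 x10 x11 : α) (h : 5 < 12) : ![x0,x1,x2,x3,x4,x5,x6,x7,x8,x9,x10,x11] (⟨5, h⟩ : Fin 12) = x5 := rfl
lemma vec12m_6 {α : Type*} (x0 x1 x2 x3 x4 x5 x6 x7 x8 x9 x10 x11 : α) (h : 6 < 12) : ![x0,x1,x2,x3,x4,x5,x6,x7,x8,x9,x10,x11] (⟨6, h⟩ : Fin 12) = x6 := rfl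
lemma vec12m_7 {α : Type*} (x0 x1 x2 x3 x4 x5 x6 x7 x8 x9 x10 x11 : α) (h : 7 < 12) : ![x0,x1,x2,x3,x4,x5,x6,x7,x8,x9,x10,x11] (⟨7, h⟩ : Fin 12) = x7 := rfl
lemma vec12m_8 {α : Type*} (x0 x1 x2 x3 x4 x5 x6 x7 x8 x9 x10 x11 : α) (h : 8 < 12) : ![x0,x1,x2,x3,x4,x5,x6,x7,x8,x9,x10,x11] (⟨8, h⟩ : Fin 12) = x8 := rfl
lemma vec12m_9 {α : Type*} (x0 x1 x2 x3 x4 x5 x6 x7 x8 x9 x10 x11 : α) (h : 9 < 12) : ![x0,x1,x2,x3,x4,x5,x6,x7,x8,x9,x10,x11] (⟨9, h⟩ : Fin 12) = x9 := rfl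
lemma vec12m_10 {α : Type*} (x0 x1 x2 x3 x4 x5 x6 x7 x8 x9 x10 x11 : α) (h : 10 < 12) : ![x0,x1,x2,x3,x4,x5,x6,x7,x8,x9,x10,x11] (⟨10, h⟩ : Fin 12) = x10 := rfl
lemma vec12m_11 {α : Type*} (x0 x1 x2 x3 x4 x5 x6 x7 x8 x9 x10 x11 : α) (h : 11 < 12) : ![x0,x1,x2,x3,x4,x5,x6,x7,x8,x9,x10,x11] (⟨11, h⟩ : Fin 12) = x11 := rfl

theorem balanced_subspace_invariant (n : Fin 12) (w : Fin 6 → ℝ) (hw : w ∈ V) :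
    Matrix.vecMul w (B n) ∈ V := by
  obtain ⟨h1, h2, h3⟩ := hw
  fin_cases n <;>
    refine ⟨?_, ?_, ?_⟩ <;>
    simp only [B, Matrix.vecMul, dotProduct, Fin.sum_univ_six, Matrix.of_apply,
      vec6_0, vec6_1, vec6_2, vec6_3, vec6_4, vec6_5,
      vec12_0, vec12_1, vec12_2, vec12_3, vec12_4, vec12_5,
      vec12_6, vec12_7, vec12_8, vec12_9, vec12_10, vec12_11,
      vec12m_0, vec12m_1, vec12m_2, vec12m_3, vec12m_4, vec12m_5,
      vec12m_6, vec12m_7, vec12m_8, vec12m_9, vec12m_10, vec12m_11] <;>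
    linarith
end

section
/- Each of the twelve 3×3 integer matrices G_n (the south-east blocks of the conjugated arbitrage matrices) maps the set {0, ±s₁, ±s₂, ±s₃, ±s₄, ±s₅, ±s₆} into itself, where s₁=(1,0,1), s₂=(1,0,0), s₃=(0,0,1), s₄=(1,1,1), s₅=(0,1,0), s₆=(0,1,1) are row vectors acted on by right multiplication. -/
/-- The twelve `3×3` south-east blocks `G_n` of the conjugated strong-arbitrage matrices. -/
def G : Fin 12 → Matrix (Fin 3) (Fin 3) ℝ :=
  ![!![0,0,-1; 0,1,0; 0,0,1],
    !![1,0,0; 1,1,1; -1,0,0],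
    !![0,0,0; 0,1,0; 0,0,1],
    !![0,0,0; 0,1,0; 1,0,1],
    !![1,0,0; 0,1,1; 0,0,0],
    !![1,0,1; 0,1,0; 0,0,0],
    !![0,-1,-1; 0,1,0; 0,0,1],
    !![1,0,0; -1,0,-1; 0,0,1],
    !![1,0,0; 0,0,0; 0,1,1],
    !![1,0,0; 0,0,0; 0,0,1],
    !![1,1,1; 0,1,0; 0,-1,0],
    !![1,0,0; 0,0,-1; 0,0,1]]

def s1 : Fin 3 → ℝ := ![1,0,1]
def s2 : Fin 3 → ℝ := ![1,0,0]
def s3 : Fin 3 → ℝ := ![0,0,1]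
def s4 : Fin 3 → ℝ := ![1,1,1]
def s5 : Fin 3 → ℝ := ![0,1,0]
def s6 : Fin 3 → ℝ := ![0,1,1]

/-- The set `{0, ±s₁, …, ±s₆}`. -/
def S : Set (Fin 3 → ℝ) :=
  {0, s1, -s1, s2, -s2, s3, -s3, s4, -s4, s5, -s5, s6, -s6}

/-!
Write `c₀ = 0, c₁ = s₂, c₂ = s₁, c₃ = s₄`. Then `S` is exactly the set of differences `cᵢ - cⱼ`
(it is the root system `A₃` together with `0`, written in a basis of simple roots). Each `G n`
acts on the four points `cᵢ` as an affine map: up to one common translation it fixes three of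
them and moves the fourth onto another one, the twelve matrices realising the twelve ordered
pairs of distinct points. A linear map that sends the `cᵢ`, up to a common translation, into
the `cᵢ` sends their differences into their differences.
-/

open Matrix Set Pointwise

theorem mapsTo_sub_of_add_mem {F M N : Type*} [AddCommGroup M] [AddCommGroup N] [FunLike F M N]
    [AddMonoidHomClass F M N] (f : F) {A : Set M} {B : Set N} (t : N)
    (h : ∀ a ∈ A, f a + t ∈ B) : MapsTo f (A - A) (B - B) := by
  rintro _ ⟨a, ha, b, hb, rfl⟩
  exact ⟨f a + t, h a ha, f b + t, h b hb, by simp⟩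

def vertex : Fin 4 → Fin 3 → ℝ := ![0, s2, s1, s4]

theorem S_eq_range_vertex_sub : S = range vertex - range vertex := by
  refine Subset.antisymm ?_ ?_
  · rintro w (rfl|rfl|rfl|rfl|rfl|rfl|rfl|rfl|rfl|rfl|rfl|rfl|rfl) <;>
      simp [mem_sub, vertex, s1, s2, s3, s4, s5, s6]
  · rintro _ ⟨_, ⟨i, rfl⟩, _, ⟨j, rfl⟩, rfl⟩
    fin_cases i <;> fin_cases j <;>
      simp [S, vertex, s1, s2, s3, s4, s5, s6, eq_comm (a := (0 : Fin 1 → ℝ))]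

/-- `G n` moves the vertex `(collapse n).1` onto the vertex `(collapse n).2`. -/
def collapse : Fin 12 → Fin 4 × Fin 4 :=
  ![(0, 2), (2, 0), (0, 1), (1, 0), (2, 1), (1, 2), (0, 3), (3, 0), (2, 3), (3, 2), (1, 3), (3, 1)]

def vertexMap (n : Fin 12) : Fin 4 → Fin 4 :=
  Function.update id (collapse n).1 (collapse n).2

theorem vertex_vecMul_G_add (n : Fin 12) (i : Fin 4) :
    vertex i ᵥ* G n + vertex (vertexMap n 0) = vertex (vertexMap n i) := by
  fin_cases n <;> fin_cases i <;>
    simp [vertexMap, collapse, Function.update, vertex, G, s1, s2, s4]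

theorem key_set_invariant (n : Fin 12) (w : Fin 3 → ℝ) (hw : w ∈ S) :
    Matrix.vecMul w (G n) ∈ S := by
  rw [S_eq_range_vertex_sub] at hw ⊢
  refine mapsTo_sub_of_add_mem (G n).vecMulLinear (vertex (vertexMap n 0)) ?_ hw
  rintro _ ⟨i, rfl⟩
  exact ⟨vertexMap n i, (vertex_vecMul_G_add n i).symm⟩
end

section
/- Every row vector v ∈ ℝ³ that is annihilated by at least one of the twelve matrices G_n (i.e., v·G_n = 0 for some n) is a scalar multiple of one of the six vectors s₁=(1,0,1), s₂=(1,0,0), s₃=(0,0,1), s₄=(1,1,1), s₅=(0,1,0), s₆=(0,1,1). -/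
theorem annihilated_vectors_are_multiples_of_s
    (w : Fin 3 → ℝ) (hw : ∃ n : Fin 12, Matrix.vecMul w (G n) = 0) :
    ∃ c : ℝ, w = c • s1 ∨ w = c • s2 ∨ w = c • s3 ∨ w = c • s4 ∨ w = c • s5 ∨ w = c • s6 := by
  obtain ⟨n, hn⟩ := hw
  fin_cases n
  · replace hn : Matrix.vecMul w !![0,0,-1; 0,1,0; 0,0,1] = 0 := hn
    have h0 := congrFun hn 0
    have h1 := congrFun hn 1
    have h2 := congrFun hn 2
    simp [Matrix.vecMul, dotProduct, Fin.sum_univ_three,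
      Matrix.vecHead, Matrix.vecTail] at h0 h1 h2
    refine ⟨w 0, Or.inl ?_⟩
    funext x
    fin_cases x <;> simp [s1, s2, s3, s4, s5, s6] <;> linarith
  · replace hn : Matrix.vecMul w !![1,0,0; 1,1,1; -1,0,0] = 0 := hn
    have h0 := congrFun hn 0
    have h1 := congrFun hn 1
    have h2 := congrFun hn 2
    simp [Matrix.vecMul, dotProduct, Fin.sum_univ_three,
      Matrix.vecHead, Matrix.vecTail] at h0 h1 h2
    refine ⟨w 0, Or.inl ?_⟩
    funext x
    fin_cases x <;> simp [s1, s2, s3, s4, s5, s6] <;> linarith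
  · replace hn : Matrix.vecMul w !![0,0,0; 0,1,0; 0,0,1] = 0 := hn
    have h0 := congrFun hn 0
    have h1 := congrFun hn 1
    have h2 := congrFun hn 2
    simp [Matrix.vecMul, dotProduct, Fin.sum_univ_three,
      Matrix.vecHead, Matrix.vecTail] at h0 h1 h2
    refine ⟨w 0, Or.inr (Or.inl ?_)⟩
    funext x
    fin_cases x <;> simp [s1, s2, s3, s4, s5, s6] <;> linarith
  · replace hn : Matrix.vecMul w !![0,0,0; 0,1,0; 1,0,1] = 0 := hn
    have h0 := congrFun hn 0
    have h1 := congrFun hn 1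
    have h2 := congrFun hn 2
    simp [Matrix.vecMul, dotProduct, Fin.sum_univ_three,
      Matrix.vecHead, Matrix.vecTail] at h0 h1 h2
    refine ⟨w 0, Or.inr (Or.inl ?_)⟩
    funext x
    fin_cases x <;> simp [s1, s2, s3, s4, s5, s6] <;> linarith
  · replace hn : Matrix.vecMul w !![1,0,0; 0,1,1; 0,0,0] = 0 := hn
    have h0 := congrFun hn 0
    have h1 := congrFun hn 1
    have h2 := congrFun hn 2
    simp [Matrix.vecMul, dotProduct, Fin.sum_univ_three,
      Matrix.vecHead, Matrix.vecTail] at h0 h1 h2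
    refine ⟨w 2, Or.inr (Or.inr (Or.inl ?_))⟩
    funext x
    fin_cases x <;> simp [s1, s2, s3, s4, s5, s6] <;> linarith
  · replace hn : Matrix.vecMul w !![1,0,1; 0,1,0; 0,0,0] = 0 := hn
    have h0 := congrFun hn 0
    have h1 := congrFun hn 1
    have h2 := congrFun hn 2
    simp [Matrix.vecMul, dotProduct, Fin.sum_univ_three,
      Matrix.vecHead, Matrix.vecTail] at h0 h1 h2
    refine ⟨w 2, Or.inr (Or.inr (Or.inl ?_))⟩
    funext x
    fin_cases x <;> simp [s1, s2, s3, s4, s5, s6] <;> linarith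
  · replace hn : Matrix.vecMul w !![0,-1,-1; 0,1,0; 0,0,1] = 0 := hn
    have h0 := congrFun hn 0
    have h1 := congrFun hn 1
    have h2 := congrFun hn 2
    simp [Matrix.vecMul, dotProduct, Fin.sum_univ_three,
      Matrix.vecHead, Matrix.vecTail] at h0 h1 h2
    refine ⟨w 0, Or.inr (Or.inr (Or.inr (Or.inl ?_)))⟩
    funext x
    fin_cases x <;> simp [s1, s2, s3, s4, s5, s6] <;> linarith
  · replace hn : Matrix.vecMul w !![1,0,0; -1,0,-1; 0,0,1] = 0 := hn
    have h0 := congrFun hn 0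
    have h1 := congrFun hn 1
    have h2 := congrFun hn 2
    simp [Matrix.vecMul, dotProduct, Fin.sum_univ_three,
      Matrix.vecHead, Matrix.vecTail] at h0 h1 h2
    refine ⟨w 0, Or.inr (Or.inr (Or.inr (Or.inl ?_)))⟩
    funext x
    fin_cases x <;> simp [s1, s2, s3, s4, s5, s6] <;> linarith
  · replace hn : Matrix.vecMul w !![1,0,0; 0,0,0; 0,1,1] = 0 := hn
    have h0 := congrFun hn 0
    have h1 := congrFun hn 1
    have h2 := congrFun hn 2
    simp [Matrix.vecMul, dotProduct, Fin.sum_univ_three,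
      Matrix.vecHead, Matrix.vecTail] at h0 h1 h2
    refine ⟨w 1, Or.inr (Or.inr (Or.inr (Or.inr (Or.inl ?_))))⟩
    funext x
    fin_cases x <;> simp [s1, s2, s3, s4, s5, s6] <;> linarith
  · replace hn : Matrix.vecMul w !![1,0,0; 0,0,0; 0,0,1] = 0 := hn
    have h0 := congrFun hn 0
    have h1 := congrFun hn 1
    have h2 := congrFun hn 2
    simp [Matrix.vecMul, dotProduct, Fin.sum_univ_three,
      Matrix.vecHead, Matrix.vecTail] at h0 h1 h2
    refine ⟨w 1, Or.inr (Or.inr (Or.inr (Or.inr (Or.inl ?_))))⟩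
    funext x
    fin_cases x <;> simp [s1, s2, s3, s4, s5, s6] <;> linarith
  · replace hn : Matrix.vecMul w !![1,1,1; 0,1,0; 0,-1,0] = 0 := hn
    have h0 := congrFun hn 0
    have h1 := congrFun hn 1
    have h2 := congrFun hn 2
    simp [Matrix.vecMul, dotProduct, Fin.sum_univ_three,
      Matrix.vecHead, Matrix.vecTail] at h0 h1 h2
    refine ⟨w 1, Or.inr (Or.inr (Or.inr (Or.inr (Or.inr ?_))))⟩
    funext x
    fin_cases x <;> simp [s1, s2, s3, s4, s5, s6] <;> linarith
  · replace hn : Matrix.vecMul w !![1,0,0; 0,0,-1; 0,0,1] = 0 := hn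
    have h0 := congrFun hn 0
    have h1 := congrFun hn 1
    have h2 := congrFun hn 2
    simp [Matrix.vecMul, dotProduct, Fin.sum_univ_three,
      Matrix.vecHead, Matrix.vecTail] at h0 h1 h2
    refine ⟨w 1, Or.inr (Or.inr (Or.inr (Or.inr (Or.inr ?_))))⟩
    funext x
    fin_cases x <;> simp [s1, s2, s3, s4, s5, s6] <;> linarith
end

section
/- There exists λ > 0 such that for every finite sequence k₁,...,k_N ∈ {1,...,12}, every entry of the matrix product B_{k₁}⋯B_{k_N} − (any fixed product structure) grows at most linearly: ‖B_{k₁}⋯B_{k_N}‖ ≤ λ·N for all N ≥ 1 (in any fixed matrix norm). -/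
/-!
Each `B n` is `1 + W F n` for a single `6 × 3` matrix `W`, and it maps the column space of `W`
into itself, acting there by a `3 × 3` matrix `G n`: `B n W = W G n`. This is the paper's block form `[[I, 0], [F n, G n]]` without the change of basis. Then
`B_{k₁} ⋯ B_{k_N} = 1 + W X` with `X = ∑ᵢ G_{k₁} ⋯ G_{k_{i-1}} F_{kᵢ}`, a sum of `N` terms, so the
product grows linearly as soon as the products of the `G n` are bounded. They are: the rows of
every such product lie in an explicit finite set of integer vectors.
-/

open Matrix

attribute [local instance] Matrix.linftyOpNormedAddCommGroup Matrix.linftyOpNormedRing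

section LinearGrowth

variable {ι m k α : Type*} [Fintype m] [Fintype k]

theorem Matrix.norm_entry_le_linfty_opNorm [NormedAddCommGroup α] (A : Matrix m k α)
    (i : m) (j : k) : ‖A i j‖ ≤ ‖A‖ := by
  rw [linfty_opNorm_def]
  calc ‖A i j‖ = ((‖A i j‖₊ : NNReal) : ℝ) := rfl
    _ ≤ ((∑ j, ‖A i j‖₊ : NNReal) : ℝ) := by
      gcongr; exact Finset.single_le_sum (f := fun j => ‖A i j‖₊) (by simp) (Finset.mem_univ j)
    _ ≤ _ := by
      gcongr; exact Finset.le_sup (f := fun i => ∑ j, ‖A i j‖₊) (Finset.mem_univ i)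

variable [DecidableEq m] [DecidableEq k] {B : ι → Matrix m m α} {W : Matrix m k α}
  {F : ι → Matrix k m α} {G : ι → Matrix k k α}

theorem list_prod_map_mul_eq_mul_list_prod_map [Semiring α] (hBW : ∀ n, B n * W = W * G n)
    (L : List ι) : (L.map B).prod * W = W * (L.map G).prod := by
  induction L with
  | nil => simp
  | cons a l ih =>
    simp only [List.map_cons, List.prod_cons]
    rw [Matrix.mul_assoc, ih, ← Matrix.mul_assoc, hBW, Matrix.mul_assoc]

variable [NormedRing α] {g f : ℝ}

theorem exists_list_prod_map_eq_one_add_mul (hB : ∀ n, B n = 1 + W * F n)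
    (hBW : ∀ n, B n * W = W * G n) (hG : ∀ L : List ι, ‖(L.map G).prod‖ ≤ g)
    (hF : ∀ n, ‖F n‖ ≤ f) (L : List ι) :
    ∃ X : Matrix k m α, (L.map B).prod = 1 + W * X ∧ ‖X‖ ≤ g * f * L.length := by
  induction L using List.reverseRecOn with
  | nil => exact ⟨0, by simp, by simp⟩
  | append_singleton l a ih =>
    obtain ⟨X, hX, hXnorm⟩ := ih
    refine ⟨X + (l.map G).prod * F a, ?_, ?_⟩
    · calc ((l ++ [a]).map B).prod = (l.map B).prod + (l.map B).prod * W * F a := by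
            simp [hB a, Matrix.mul_add, Matrix.mul_assoc]
        _ = 1 + W * (X + (l.map G).prod * F a) := by
            rw [list_prod_map_mul_eq_mul_list_prod_map hBW, hX]
            simp only [Matrix.mul_add, Matrix.mul_assoc, add_assoc]
    · have hg : 0 ≤ g := (norm_nonneg _).trans (hG [])
      calc ‖X + (l.map G).prod * F a‖ ≤ ‖X‖ + ‖(l.map G).prod‖ * ‖F a‖ :=
            (norm_add_le _ _).trans (by gcongr; exact linfty_opNorm_mul _ _)
        _ ≤ g * f * l.length + g * f := by gcongr; exacts [hG l, hF a]
        _ = g * f * (l ++ [a]).length := by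
            push_cast [List.length_append, List.length_singleton]; ring

theorem norm_list_prod_map_le (hB : ∀ n, B n = 1 + W * F n)
    (hBW : ∀ n, B n * W = W * G n) (hG : ∀ L : List ι, ‖(L.map G).prod‖ ≤ g)
    (hF : ∀ n, ‖F n‖ ≤ f) (L : List ι) :
    ‖(L.map B).prod‖ ≤ ‖(1 : Matrix m m α)‖ + ‖W‖ * (g * f * L.length) := by
  obtain ⟨X, hX, hXnorm⟩ := exists_list_prod_map_eq_one_add_mul hB hBW hG hF L
  rw [hX]
  exact (norm_add_le _ _).trans (by gcongr; exact (linfty_opNorm_mul _ _).trans (by gcongr))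

end LinearGrowth

namespace StrongArbitrage

def W : Matrix (Fin 6) (Fin 3) ℤ :=
  !![-1,0,0; -1,1,0; 0,0,-1; 1,-1,-1; 0,-1,0; 0,1,1]

def F : Fin 12 → Matrix (Fin 3) (Fin 6) ℤ :=
  ![!![1,0,0,0,0,0; 0,0,0,0,0,0; 0,0,0,0,0,0],
    !![1,0,0,0,0,0; 1,0,0,0,0,0; 0,0,0,0,0,0],
    !![0,0,0,-1,0,0; 0,0,0,0,0,0; 0,0,0,0,0,0],
    !![0,0,0,0,0,0; 0,0,0,0,0,0; 0,0,0,1,0,0],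
    !![0,0,0,0,0,-1; 0,0,0,0,0,-1; 0,0,0,0,0,0],
    !![0,0,0,0,0,0; 0,0,0,0,0,0; 0,0,0,0,0,-1],
    !![0,1,0,0,0,0; 0,0,0,0,0,0; 0,0,0,0,0,0],
    !![0,0,0,0,0,0; 0,-1,0,0,0,0; 0,1,0,0,0,0],
    !![0,0,0,0,1,0; 0,0,0,0,1,0; 0,0,0,0,0,0],
    !![0,0,0,0,0,0; 0,0,0,0,1,0; 0,0,0,0,-1,0],
    !![0,0,0,0,0,0; 0,0,0,0,0,0; 0,0,1,0,0,0],
    !![0,0,0,0,0,0; 0,0,-1,0,0,0; 0,0,1,0,0,0]]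

def G : Fin 12 → Matrix (Fin 3) (Fin 3) ℤ :=
  ![!![0,0,0; 0,1,0; 0,0,1],
    !![0,0,0; -1,1,0; 0,0,1],
    !![0,1,1; 0,1,0; 0,0,1],
    !![1,0,0; 0,1,0; 1,-1,0],
    !![1,-1,-1; 0,0,-1; 0,0,1],
    !![1,0,0; 0,1,0; 0,-1,0],
    !![0,1,0; 0,1,0; 0,0,1],
    !![1,0,0; 1,0,0; -1,1,1],
    !![1,-1,0; 0,0,0; 0,0,1],
    !![1,0,0; 0,0,0; 0,1,1],
    !![1,0,0; 0,1,0; 0,0,0],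
    !![1,0,0; 0,1,1; 0,0,0]]

def rows : List (Fin 3 → ℤ) :=
  [![-1,0,0], ![-1,1,0], ![-1,1,1], ![0,-1,-1], ![0,-1,0], ![0,0,-1], ![0,0,0], ![0,0,1],
    ![0,1,0], ![0,1,1], ![1,-1,-1], ![1,-1,0], ![1,0,0]]

set_option maxHeartbeats 1000000 in
theorem B_eq_map (n : Fin 12) : B n = (1 + W * F n).map (Int.cast : ℤ → ℝ) := by
  ext i j
  rw [map_apply]
  fin_cases n <;> fin_cases i <;> fin_cases j <;>
    (simp only [B]; norm_num; exact_mod_cast (by decide))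

theorem list_prod_map_B (L : List (Fin 12)) :
    (L.map B).prod = (L.map fun n => 1 + W * F n).prod.map (Int.cast : ℤ → ℝ) := by
  have hB : B = (Int.castRingHom ℝ).mapMatrix ∘ fun n => 1 + W * F n := funext B_eq_map
  rw [hB, ← List.map_map, ← map_list_prod]
  rfl

theorem one_add_W_mul_F_mul_W : ∀ n, (1 + W * F n) * W = W * G n := by decide

theorem vecMul_G_mem_rows : ∀ r ∈ rows, ∀ n, r ᵥ* G n ∈ rows := by decide

theorem one_row_mem_rows (i : Fin 3) : (1 : Matrix (Fin 3) (Fin 3) ℤ) i ∈ rows := by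
  fin_cases i <;> decide

theorem list_prod_map_G_row_mem_rows (L : List (Fin 12)) (i : Fin 3) :
    (L.map G).prod i ∈ rows := by
  induction L using List.reverseRecOn generalizing i with
  | nil => exact one_row_mem_rows i
  | append_singleton l a ih =>
    rw [List.map_append, List.prod_append, List.map_singleton, List.prod_singleton,
      mul_apply_eq_vecMul]
    exact vecMul_G_mem_rows _ (ih i) a

theorem exists_norm_list_prod_map_G_le : ∃ g, ∀ L : List (Fin 12), ‖(L.map G).prod‖ ≤ g := by
  have hfin : {M : Matrix (Fin 3) (Fin 3) ℤ | ∀ i, M i ∈ rows}.Finite :=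
    Set.Finite.pi' fun _ => List.finite_toSet rows
  obtain ⟨g, hg⟩ := (hfin.image norm).bddAbove
  exact ⟨g, fun L => hg ⟨_, list_prod_map_G_row_mem_rows L, rfl⟩⟩

end StrongArbitrage

open StrongArbitrage

theorem B_products_grow_at_most_linearly :
    ∃ lam : ℝ, 0 < lam ∧ ∀ L : List (Fin 12), 1 ≤ L.length →
      ∀ i j : Fin 6, |((L.map B).prod) i j| ≤ lam * L.length := by
  obtain ⟨g, hG⟩ := exists_norm_list_prod_map_G_le
  have hg : 0 ≤ g := (norm_nonneg _).trans (hG [])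
  set f := ∑ n, ‖F n‖
  have hF (n : Fin 12) : ‖F n‖ ≤ f :=
    Finset.single_le_sum (fun _ _ => norm_nonneg _) (Finset.mem_univ n)
  have hf : 0 ≤ f := by positivity
  refine ⟨‖(1 : Matrix (Fin 6) (Fin 6) ℤ)‖ + ‖W‖ * (g * f),
    add_pos_of_pos_of_nonneg (norm_pos_iff.2 one_ne_zero) (by positivity), fun L hL i j => ?_⟩
  set P := (L.map fun n => 1 + W * F n).prod
  have hN : (1 : ℝ) ≤ L.length := by exact_mod_cast hL
  calc |((L.map B).prod) i j| = ‖P i j‖ := by rw [list_prod_map_B, map_apply, Int.norm_eq_abs]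
    _ ≤ ‖P‖ := norm_entry_le_linfty_opNorm P i j
    _ ≤ ‖(1 : Matrix (Fin 6) (Fin 6) ℤ)‖ + ‖W‖ * (g * f * L.length) :=
        norm_list_prod_map_le (fun _ => rfl) one_add_W_mul_F_mul_W hG hF L
    _ ≤ (‖(1 : Matrix (Fin 6) (Fin 6) ℤ)‖ + ‖W‖ * (g * f)) * L.length := by
        nlinarith [norm_nonneg (1 : Matrix (Fin 6) (Fin 6) ℤ), norm_nonneg W, mul_nonneg hg hf]
end
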